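/- Fix q ∈ (0,1), a half-integer J, and an integer R ≥ 1 with 4J²Rq^{2R} < 1. Let Ψ₀ be the normalized ground state of the spin-1/2 ladder Hamiltonian H̃ on Λ̃_R = [−R+1,R]×[1,2J] in any total-S³ sector M (explicitly, Ψ₀ = Z^{−1} Σ_σ W(σ)|σ⟩ over configurations σ with Σ σ = M, where W(σ) = Π_{(α,k)} q^{−ασ(α,k)} and Z normalizes). Let D_R be the orthogonal projection onto the span of configuration basis vectors |σ⟩ having at most 2J−1 down spins among the sites (−R+1,1),…,(−R+1,2J) and at least one down spin among the sites (R,1),…,(R,2J). Then for every M, ‖D_R Ψ₀‖² ≤ 4J²R q^{2R} / (1 − 4J²R q^{2R}). -/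
import Mathlib


open scoped BigOperators Classical

noncomputable section

namespace XXZ

/-- `m`-value of the basis index `k` for spin `J = twoJ/2`: `m = k - twoJ/2`. -/
def mval (twoJ : ℕ) (k : Fin (twoJ + 1)) : ℝ := (k : ℝ) - (twoJ : ℝ) / 2

/-- The third spin matrix `S³` for spin `J = twoJ/2`. -/
def S3 (twoJ : ℕ) : Matrix (Fin (twoJ + 1)) (Fin (twoJ + 1)) ℂ :=
  Matrix.diagonal fun k => ((mval twoJ k : ℝ) : ℂ)

/-- The raising operator `S⁺`. -/
def Splus (twoJ : ℕ) : Matrix (Fin (twoJ + 1)) (Fin (twoJ + 1)) ℂ :=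
  Matrix.of fun k' k => if (k' : ℕ) = (k : ℕ) + 1 then
    ((Real.sqrt ((twoJ : ℝ) / 2 * ((twoJ : ℝ) / 2 + 1) - mval twoJ k * (mval twoJ k + 1)) : ℝ) : ℂ)
  else 0

/-- The lowering operator `S⁻`. -/
def Sminus (twoJ : ℕ) : Matrix (Fin (twoJ + 1)) (Fin (twoJ + 1)) ℂ :=
  Matrix.of fun k' k => if (k' : ℕ) + 1 = (k : ℕ) then
    ((Real.sqrt ((twoJ : ℝ) / 2 * ((twoJ : ℝ) / 2 + 1) - mval twoJ k * (mval twoJ k - 1)) : ℝ) : ℂ)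
  else 0

/-- `S¹ = (S⁺ + S⁻)/2`. -/
def S1 (twoJ : ℕ) : Matrix (Fin (twoJ + 1)) (Fin (twoJ + 1)) ℂ :=
  (2 : ℂ)⁻¹ • (Splus twoJ + Sminus twoJ)

/-- `S² = (S⁺ - S⁻)/(2i)`. -/
def S2 (twoJ : ℕ) : Matrix (Fin (twoJ + 1)) (Fin (twoJ + 1)) ℂ :=
  (2 * Complex.I)⁻¹ • (Splus twoJ - Sminus twoJ)

/-- A single-site operator `A` acting at the site `α` of a many-site system. -/
def oneSite {ι : Type*} [Fintype ι] [DecidableEq ι] {d : ℕ}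
    (A : Matrix (Fin d) (Fin d) ℂ) (α : ι) :
    Matrix (ι → Fin d) (ι → Fin d) ℂ :=
  Matrix.of fun σ τ => A (σ α) (τ α) *
    ∏ β ∈ Finset.univ.filter (fun β => β ≠ α), (if σ β = τ β then (1 : ℂ) else 0)

/-- The XXZ interaction `h^J(α,β)` for spin `J = twoJ/2` with anisotropy `Δ`:
`h = J²·1 − S³_α S³_β − Δ⁻¹(S¹_α S¹_β + S²_α S²_β) + J√(1−Δ⁻²)(S³_α − S³_β)`. -/
def hInt (twoJ : ℕ) (Δ : ℝ) {ι : Type*} [Fintype ι] [DecidableEq ι] (α β : ι) :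
    Matrix (ι → Fin (twoJ + 1)) (ι → Fin (twoJ + 1)) ℂ :=
  ((((twoJ : ℝ) / 2) ^ 2 : ℝ) : ℂ) • (1 : Matrix (ι → Fin (twoJ + 1)) (ι → Fin (twoJ + 1)) ℂ)
    - oneSite (S3 twoJ) α * oneSite (S3 twoJ) β
    - ((Δ⁻¹ : ℝ) : ℂ) • (oneSite (S1 twoJ) α * oneSite (S1 twoJ) β
        + oneSite (S2 twoJ) α * oneSite (S2 twoJ) β)
    + (((twoJ : ℝ) / 2 * Real.sqrt (1 - Δ⁻¹ ^ 2) : ℝ) : ℂ) •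
        (oneSite (S3 twoJ) α - oneSite (S3 twoJ) β)

/-- The spin-`J` XXZ chain Hamiltonian `H^J_{[1,L]} = Σ_{α=1}^{L-1} h^J(α,α+1)`. -/
def Hchain (twoJ L : ℕ) (Δ : ℝ) :
    Matrix (Fin L → Fin (twoJ + 1)) (Fin L → Fin (twoJ + 1)) ℂ :=
  ∑ x : Fin L, if h : (x : ℕ) + 1 < L then hInt twoJ Δ x ⟨(x : ℕ) + 1, h⟩ else 0

/-- Total third component of spin `S³_tot = Σ_α S³_α`. -/
def S3tot (twoJ : ℕ) {ι : Type*} [Fintype ι] [DecidableEq ι] :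
    Matrix (ι → Fin (twoJ + 1)) (ι → Fin (twoJ + 1)) ℂ :=
  ∑ α : ι, oneSite (S3 twoJ) α

/-- The standard inner product, antilinear in the first argument. -/
def ip {n : Type*} [Fintype n] (v w : n → ℂ) : ℂ :=
  ∑ i, (starRingEnd ℂ) (v i) * w i

/-- `ψ` lies in the sector of total `S³`-eigenvalue `M`. -/
def inSector (twoJ : ℕ) {ι : Type*} [Fintype ι] [DecidableEq ι]
    (M : ℝ) (ψ : (ι → Fin (twoJ + 1)) → ℂ) : Prop :=
  (S3tot twoJ).mulVec ψ = (M : ℂ) • ψ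

/-- The spectral gap `γ([1,L],J,M)`: the infimum of the Rayleigh quotient of `H^J_{[1,L]}`
over nonzero vectors of the sector `M` orthogonal to the kernel of `H^J_{[1,L]}` in that
sector. -/
def gap (twoJ L : ℕ) (Δ M : ℝ) : ℝ :=
  sInf { r : ℝ | ∃ ψ : (Fin L → Fin (twoJ + 1)) → ℂ, ψ ≠ 0 ∧
    inSector twoJ M ψ ∧
    (∀ φ : (Fin L → Fin (twoJ + 1)) → ℂ,
      (Hchain twoJ L Δ).mulVec φ = 0 → inSector twoJ M φ → ip φ ψ = 0) ∧
    r = (ip ψ ((Hchain twoJ L Δ).mulVec ψ)).re / (ip ψ ψ).re }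

/-- The sites of the interval `[-R+1, R] ⊆ ℤ`. -/
abbrev RSite (R : ℕ) : Type := ↥(Finset.Icc (-(R : ℤ) + 1) (R : ℤ))

/-- The squared weight `W(σ)² = Π_{(α,k)} q^{-2α σ(α,k)}` of a spin configuration on the
ladder `[-R+1,R] × [1,2J]`. -/
def Wsq (q : ℝ) (twoJ R : ℕ) (σ : (RSite R × Fin twoJ) → Fin (1 + 1)) : ℝ :=
  ∏ p : RSite R × Fin twoJ, q ^ (-2 * ((p.1 : ℤ) : ℝ) * mval 1 (σ p))

/-- The total number of down spins of `σ`. -/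
def nDown (twoJ R : ℕ) (σ : (RSite R × Fin twoJ) → Fin (1 + 1)) : ℕ :=
  (Finset.univ.filter (fun p : RSite R × Fin twoJ => σ p = 0)).card

/-- The number of down spins of `σ` in the rightmost rung `{R} × [1,2J]`. -/
def jDownRight (twoJ R : ℕ) (σ : (RSite R × Fin twoJ) → Fin (1 + 1)) : ℕ :=
  (Finset.univ.filter
    (fun p : RSite R × Fin twoJ => σ p = 0 ∧ ((p.1 : ℤ) = (R : ℤ)))).card

/-- The number of down spins of `σ` in the leftmost rung `{-R+1} × [1,2J]`. -/
def jDownLeft (twoJ R : ℕ) (σ : (RSite R × Fin twoJ) → Fin (1 + 1)) : ℕ :=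
  (Finset.univ.filter
    (fun p : RSite R × Fin twoJ => σ p = 0 ∧ ((p.1 : ℤ) = -(R : ℤ) + 1))).card

/-- `Z_j² = Σ_{σ : n down spins, j of them in the rightmost rung} W(σ)²`. -/
def Zsq (q : ℝ) (twoJ R n j : ℕ) : ℝ :=
  ∑ σ : (RSite R × Fin twoJ) → Fin (1 + 1),
    if nDown twoJ R σ = n ∧ jDownRight twoJ R σ = j then Wsq q twoJ R σ else 0


/-! ### Auxiliary material for the main estimate -/

lemma fin2_cases (v : Fin (1 + 1)) : v = 0 ∨ v = 1 := by
  rcases v with ⟨v, hv⟩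
  interval_cases v
  · exact Or.inl rfl
  · exact Or.inr rfl

lemma mval_zero : mval 1 (0 : Fin (1 + 1)) = -(1/2) := by
  norm_num [mval]

lemma mval_one : mval 1 (1 : Fin (1 + 1)) = 1/2 := by
  norm_num [mval]

lemma sum_update_eq {ι β : Type*} [Fintype ι] [DecidableEq ι] (g : β → ℝ)
    (σ : ι → β) (a : ι) (v : β) :
    ∑ p, g (Function.update σ a v p) = (∑ p, g (σ p)) - g (σ a) + g v := by
  have h : ∀ p, g (Function.update σ a v p)
      = g (σ p) + (if p = a then g v - g (σ a) else 0) := by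
    intro p
    by_cases hp : p = a
    · subst hp; simp
    · simp [Function.update_of_ne hp, hp]
  simp only [h, Finset.sum_add_distrib, Finset.sum_ite_eq' Finset.univ a,
    Finset.mem_univ, if_true]
  ring

lemma prod_update_eq {ι β : Type*} [Fintype ι] [DecidableEq ι] (f : ι → β → ℝ)
    (σ : ι → β) (a : ι) (v : β) (hfa : f a (σ a) ≠ 0) :
    ∏ p, f p (Function.update σ a v p) = (∏ p, f p (σ p)) * (f a v / f a (σ a)) := by
  have h : ∀ p, f p (Function.update σ a v p)
      = f p (σ p) * (if p = a then f a v / f a (σ a) else 1) := by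
    intro p
    by_cases hp : p = a
    · subst hp
      simp only [Function.update_self, if_true]
      field_simp
    · simp [Function.update_of_ne hp, hp]
  simp only [h, Finset.prod_mul_distrib, Finset.prod_ite_eq' Finset.univ a,
    Finset.mem_univ, if_true]

/-- The rightmost site of the interval. -/
def siteR (R : ℕ) (hR : 1 ≤ R) : RSite R :=
  ⟨(R : ℤ), by simp only [Finset.mem_Icc]; omega⟩

/-- The leftmost site of the interval. -/
def siteL (R : ℕ) (hR : 1 ≤ R) : RSite R :=
  ⟨-(R : ℤ) + 1, by simp only [Finset.mem_Icc]; omega⟩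

lemma siteR_ne_siteL (R : ℕ) (hR : 1 ≤ R) : siteR R hR ≠ siteL R hR := by
  intro h
  have h' : ((R : ℤ)) = -(R : ℤ) + 1 := congrArg Subtype.val h
  omega

/-- `σ` has a down spin in the rightmost rung and an up spin in the leftmost rung. -/
def Cond (twoJ R : ℕ) (hR : 1 ≤ R) (σ : (RSite R × Fin twoJ) → Fin (1 + 1)) : Prop :=
  (∃ j : Fin twoJ, σ (siteR R hR, j) = 0) ∧ (∃ k : Fin twoJ, σ (siteL R hR, k) = 1)

/-- Move one down spin from the rightmost rung to the leftmost rung. -/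
def Phi (twoJ R : ℕ) (hR : 1 ≤ R) (σ : (RSite R × Fin twoJ) → Fin (1 + 1)) :
    (RSite R × Fin twoJ) → Fin (1 + 1) :=
  if h : Cond twoJ R hR σ then
    Function.update (Function.update σ (siteR R hR, h.1.choose) 1)
      (siteL R hR, h.2.choose) 0
  else σ

/-- The pair of ladder indices used by `Phi`. -/
def sel (twoJ R : ℕ) (h2J : 1 ≤ twoJ) (hR : 1 ≤ R)
    (σ : (RSite R × Fin twoJ) → Fin (1 + 1)) : Fin twoJ × Fin twoJ :=
  if h : Cond twoJ R hR σ then (h.1.choose, h.2.choose) else (⟨0, h2J⟩, ⟨0, h2J⟩)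

lemma Phi_eq {twoJ R : ℕ} (hR : 1 ≤ R) (σ : (RSite R × Fin twoJ) → Fin (1 + 1))
    (h : Cond twoJ R hR σ) :
    Phi twoJ R hR σ =
      Function.update (Function.update σ (siteR R hR, h.1.choose) 1)
        (siteL R hR, h.2.choose) 0 := dif_pos h

lemma sel_eq {twoJ R : ℕ} (h2J : 1 ≤ twoJ) (hR : 1 ≤ R)
    (σ : (RSite R × Fin twoJ) → Fin (1 + 1)) (h : Cond twoJ R hR σ) :
    sel twoJ R h2J hR σ = (h.1.choose, h.2.choose) := dif_pos h

lemma cond_of {twoJ R : ℕ} (h2J : 1 ≤ twoJ) (hR : 1 ≤ R)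
    (σ : (RSite R × Fin twoJ) → Fin (1 + 1))
    (hL : jDownLeft twoJ R σ ≤ twoJ - 1) (hRr : 1 ≤ jDownRight twoJ R σ) :
    Cond twoJ R hR σ := by
  constructor
  · have hpos : 0 < (Finset.univ.filter
        (fun p : RSite R × Fin twoJ => σ p = 0 ∧ ((p.1 : ℤ) = (R : ℤ)))).card := hRr
    obtain ⟨p, hp⟩ := Finset.card_pos.mp hpos
    simp only [Finset.mem_filter, Finset.mem_univ, true_and] at hp
    refine ⟨p.2, ?_⟩
    have h1 : p.1 = siteR R hR := Subtype.ext hp.2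
    have h2 : (p.1, p.2) = (siteR R hR, p.2) := by rw [h1]
    rw [← h2]
    exact hp.1
  · by_contra hcon
    push_neg at hcon
    have hall : ∀ k : Fin twoJ, σ (siteL R hR, k) = 0 := by
      intro k
      rcases fin2_cases (σ (siteL R hR, k)) with h | h
      · exact h
      · exact absurd h (hcon k)
    have hsub : (Finset.univ.image
          (fun k : Fin twoJ => ((siteL R hR, k) : RSite R × Fin twoJ)))
        ⊆ Finset.univ.filter
          (fun p : RSite R × Fin twoJ => σ p = 0 ∧ ((p.1 : ℤ) = -(R : ℤ) + 1)) := by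
      intro p hp
      simp only [Finset.mem_image, Finset.mem_univ, true_and] at hp
      obtain ⟨k, rfl⟩ := hp
      simp only [Finset.mem_filter, Finset.mem_univ, true_and]
      exact ⟨hall k, rfl⟩
    have hinj : Function.Injective
        (fun k : Fin twoJ => ((siteL R hR, k) : RSite R × Fin twoJ)) := by
      intro k1 k2 hk
      simpa using congrArg Prod.snd hk
    have hcard : twoJ ≤ jDownLeft twoJ R σ := by
      calc twoJ
          = (Finset.univ.image
              (fun k : Fin twoJ => ((siteL R hR, k) : RSite R × Fin twoJ))).card := by
            rw [Finset.card_image_of_injective _ hinj, Finset.card_univ, Fintype.card_fin]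
        _ ≤ _ := Finset.card_le_card hsub
    omega

lemma Wsq_pos (q : ℝ) (hq0 : 0 < q) {twoJ R : ℕ}
    (σ : (RSite R × Fin twoJ) → Fin (1 + 1)) : 0 < Wsq q twoJ R σ :=
  Finset.prod_pos fun p _ => Real.rpow_pos_of_pos hq0 _

lemma Wsq_update (q : ℝ) (hq0 : 0 < q) {twoJ R : ℕ}
    (σ : (RSite R × Fin twoJ) → Fin (1 + 1)) (a : RSite R × Fin twoJ) (v : Fin (1 + 1)) :
    Wsq q twoJ R (Function.update σ a v) =
      Wsq q twoJ R σ * q ^ (-2 * ((a.1 : ℤ) : ℝ) * (mval 1 v - mval 1 (σ a))) := by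
  have h := prod_update_eq (fun (p : RSite R × Fin twoJ) (m : Fin (1 + 1)) =>
      q ^ (-2 * ((p.1 : ℤ) : ℝ) * mval 1 m)) σ a v (Real.rpow_pos_of_pos hq0 _).ne'
  have h2 : Wsq q twoJ R (Function.update σ a v) =
      Wsq q twoJ R σ * (q ^ (-2 * ((a.1 : ℤ) : ℝ) * mval 1 v) /
        q ^ (-2 * ((a.1 : ℤ) : ℝ) * mval 1 (σ a))) := h
  rw [h2, ← Real.rpow_sub hq0]
  congr 1
  ring

lemma Wsq_Phi (q : ℝ) (hq0 : 0 < q) {twoJ R : ℕ} (hR : 1 ≤ R)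
    (σ : (RSite R × Fin twoJ) → Fin (1 + 1)) (h : Cond twoJ R hR σ) :
    Wsq q twoJ R (Phi twoJ R hR σ) = Wsq q twoJ R σ * q ^ (2 - 4 * (R : ℝ)) := by
  have hba : ((siteL R hR, h.2.choose) : RSite R × Fin twoJ) ≠ (siteR R hR, h.1.choose) :=
    fun hh => siteR_ne_siteL R hR (congrArg Prod.fst hh).symm
  have hcR : (((((siteR R hR, h.1.choose) : RSite R × Fin twoJ).1 : RSite R) : ℤ) : ℝ)
      = (R : ℝ) := by norm_num [siteR]
  have hcL : (((((siteL R hR, h.2.choose) : RSite R × Fin twoJ).1 : RSite R) : ℤ) : ℝ)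
      = 1 - (R : ℝ) := by norm_num [siteL]; ring
  rw [Phi_eq hR σ h, Wsq_update q hq0, Wsq_update q hq0,
      Function.update_of_ne hba, h.1.choose_spec, h.2.choose_spec,
      mval_zero, mval_one, hcR, hcL, mul_assoc, ← Real.rpow_add hq0]
  congr 1
  ring

lemma sum_mval_Phi {twoJ R : ℕ} (hR : 1 ≤ R)
    (σ : (RSite R × Fin twoJ) → Fin (1 + 1)) (h : Cond twoJ R hR σ) :
    ∑ p, mval 1 (Phi twoJ R hR σ p) = ∑ p, mval 1 (σ p) := by
  have hba : ((siteL R hR, h.2.choose) : RSite R × Fin twoJ) ≠ (siteR R hR, h.1.choose) :=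
    fun hh => siteR_ne_siteL R hR (congrArg Prod.fst hh).symm
  rw [Phi_eq hR σ h, sum_update_eq (mval 1), sum_update_eq (mval 1),
      Function.update_of_ne hba, h.1.choose_spec, h.2.choose_spec, mval_zero, mval_one]
  ring

lemma recon {twoJ R : ℕ} (hR : 1 ≤ R)
    (σ : (RSite R × Fin twoJ) → Fin (1 + 1)) (h : Cond twoJ R hR σ) :
    σ = Function.update (Function.update (Phi twoJ R hR σ)
        (siteL R hR, h.2.choose) 1) (siteR R hR, h.1.choose) 0 := by
  have hba : ((siteL R hR, h.2.choose) : RSite R × Fin twoJ) ≠ (siteR R hR, h.1.choose) :=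
    fun hh => siteR_ne_siteL R hR (congrArg Prod.fst hh).symm
  rw [Phi_eq hR σ h]
  funext p
  rcases eq_or_ne p (siteR R hR, h.1.choose) with hp | hp
  · subst hp
    rw [Function.update_self, h.1.choose_spec]
  · rcases eq_or_ne p (siteL R hR, h.2.choose) with hp2 | hp2
    · subst hp2
      rw [Function.update_of_ne hba, Function.update_self, h.2.choose_spec]
    · rw [Function.update_of_ne hp, Function.update_of_ne hp2,
          Function.update_of_ne hp2, Function.update_of_ne hp]

/-- For the normalized kink ground state `Ψ₀ = Z⁻¹ Σ_{Σσ = M} W(σ)|σ⟩` of the spin-1/2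
ladder on `[-R+1,R]×[1,2J]`, and `D_R` the projection onto configurations with at most
`2J-1` down spins in the leftmost rung and at least one down spin in the rightmost rung,
`‖D_R Ψ₀‖² ≤ 4J²Rq^{2R}/(1 - 4J²Rq^{2R})` in every sector `M`. -/
theorem DR_ground_state_estimate (q : ℝ) (hq0 : 0 < q) (hq1 : q < 1)
    (twoJ : ℕ) (h2J : 1 ≤ twoJ) (R : ℕ) (hR : 1 ≤ R)
    (hsmall : (twoJ : ℝ) ^ 2 * R * q ^ (2 * R) < 1) (M : ℝ) :
    (∑ σ : (RSite R × Fin twoJ) → Fin (1 + 1),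
        if (∑ p, mval 1 (σ p)) = M ∧
            jDownLeft twoJ R σ ≤ twoJ - 1 ∧ 1 ≤ jDownRight twoJ R σ then
          Wsq q twoJ R σ else 0) /
      (∑ σ : (RSite R × Fin twoJ) → Fin (1 + 1),
        if (∑ p, mval 1 (σ p)) = M then Wsq q twoJ R σ else 0) ≤
      (twoJ : ℝ) ^ 2 * R * q ^ (2 * R) / (1 - (twoJ : ℝ) ^ 2 * R * q ^ (2 * R)) := by
  classical
  set ε := (twoJ : ℝ) ^ 2 * R * q ^ (2 * R) with hεdef
  have hq2R_pos : 0 < q ^ (2 * R) := pow_pos hq0 _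
  have hε0 : 0 ≤ ε := by positivity
  have h1ε : 0 < 1 - ε := by linarith
  set A := Finset.univ.filter (fun σ : (RSite R × Fin twoJ) → Fin (1 + 1) =>
    (∑ p, mval 1 (σ p)) = M ∧ jDownLeft twoJ R σ ≤ twoJ - 1 ∧
      1 ≤ jDownRight twoJ R σ) with hA
  set S := Finset.univ.filter (fun σ : (RSite R × Fin twoJ) → Fin (1 + 1) =>
    (∑ p, mval 1 (σ p)) = M) with hS
  have hNum : (∑ σ : (RSite R × Fin twoJ) → Fin (1 + 1),
      if (∑ p, mval 1 (σ p)) = M ∧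
          jDownLeft twoJ R σ ≤ twoJ - 1 ∧ 1 ≤ jDownRight twoJ R σ then
        Wsq q twoJ R σ else 0) = ∑ σ ∈ A, Wsq q twoJ R σ := by
    rw [hA, Finset.sum_filter]
  have hDen : (∑ σ : (RSite R × Fin twoJ) → Fin (1 + 1),
      if (∑ p, mval 1 (σ p)) = M then Wsq q twoJ R σ else 0)
      = ∑ σ ∈ S, Wsq q twoJ R σ := by
    rw [hS, Finset.sum_filter]
  rw [hNum, hDen]
  have hcond : ∀ σ ∈ A, Cond twoJ R hR σ := by
    intro σ hσ
    rw [hA, Finset.mem_filter] at hσ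
    exact cond_of h2J hR σ hσ.2.2.1 hσ.2.2.2
  have hWpos : ∀ τ : (RSite R × Fin twoJ) → Fin (1 + 1), 0 < Wsq q twoJ R τ :=
    fun τ => Wsq_pos q hq0 τ
  -- pointwise weight estimate
  have hstep1 : ∀ σ ∈ A,
      Wsq q twoJ R σ ≤ q ^ (2 * R) * Wsq q twoJ R (Phi twoJ R hR σ) := by
    intro σ hσ
    have h := hcond σ hσ
    have heq : Wsq q twoJ R σ = Wsq q twoJ R (Phi twoJ R hR σ) * q ^ (4 * (R : ℝ) - 2) := by
      rw [Wsq_Phi q hq0 hR σ h, mul_assoc, ← Real.rpow_add hq0,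
          show (2 - 4 * (R : ℝ)) + (4 * (R : ℝ) - 2) = 0 by ring, Real.rpow_zero, mul_one]
    have hexp : q ^ (4 * (R : ℝ) - 2) ≤ q ^ (2 * R) := by
      rw [← Real.rpow_natCast q (2 * R)]
      apply Real.rpow_le_rpow_of_exponent_ge hq0 hq1.le
      have hR1 : (1 : ℝ) ≤ (R : ℝ) := by exact_mod_cast hR
      push_cast
      linarith
    calc Wsq q twoJ R σ = Wsq q twoJ R (Phi twoJ R hR σ) * q ^ (4 * (R : ℝ) - 2) := heq
      _ ≤ Wsq q twoJ R (Phi twoJ R hR σ) * q ^ (2 * R) :=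
          mul_le_mul_of_nonneg_left hexp (hWpos _).le
      _ = q ^ (2 * R) * Wsq q twoJ R (Phi twoJ R hR σ) := mul_comm _ _
  -- Phi maps the numerator set into the sector set
  have hmaps : ∀ σ ∈ A, Phi twoJ R hR σ ∈ S := by
    intro σ hσ
    rw [hS, Finset.mem_filter]
    refine ⟨Finset.mem_univ _, ?_⟩
    rw [sum_mval_Phi hR σ (hcond σ hσ)]
    rw [hA, Finset.mem_filter] at hσ
    exact hσ.2.1
  -- fibers of Phi have at most twoJ² elements
  have hfiber : ∀ τ : (RSite R × Fin twoJ) → Fin (1 + 1),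
      (A.filter (fun σ => Phi twoJ R hR σ = τ)).card ≤ twoJ ^ 2 := by
    intro τ
    have hinj : Set.InjOn (sel twoJ R h2J hR)
        (A.filter (fun σ => Phi twoJ R hR σ = τ)) := by
      intro σ₁ h₁ σ₂ h₂ hsel
      rw [Finset.mem_coe, Finset.mem_filter] at h₁ h₂
      have hc₁ := hcond σ₁ h₁.1
      have hc₂ := hcond σ₂ h₂.1
      have e₁ := recon hR σ₁ hc₁
      have e₂ := recon hR σ₂ hc₂
      rw [sel_eq h2J hR σ₁ hc₁, sel_eq h2J hR σ₂ hc₂] at hsel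
      have hj : hc₁.1.choose = hc₂.1.choose := congrArg Prod.fst hsel
      have hk : hc₁.2.choose = hc₂.2.choose := congrArg Prod.snd hsel
      rw [e₁, e₂, h₁.2, h₂.2, hj, hk]
    calc (A.filter (fun σ => Phi twoJ R hR σ = τ)).card
        ≤ (Finset.univ : Finset (Fin twoJ × Fin twoJ)).card :=
          Finset.card_le_card_of_injOn _ (fun _ _ => Finset.mem_univ _) hinj
      _ = twoJ ^ 2 := by
          simp [Finset.card_univ, sq]
  -- the main chain of inequalities
  have hchain : ∑ σ ∈ A, Wsq q twoJ R σ ≤ ε * ∑ τ ∈ S, Wsq q twoJ R τ := by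
    have hR1 : (1 : ℝ) ≤ (R : ℝ) := by exact_mod_cast hR
    calc ∑ σ ∈ A, Wsq q twoJ R σ
        ≤ ∑ σ ∈ A, q ^ (2 * R) * Wsq q twoJ R (Phi twoJ R hR σ) :=
          Finset.sum_le_sum hstep1
      _ = q ^ (2 * R) * ∑ σ ∈ A, Wsq q twoJ R (Phi twoJ R hR σ) := by
          rw [Finset.mul_sum]
      _ = q ^ (2 * R) * ∑ τ ∈ S, ∑ σ ∈ A.filter (fun σ => Phi twoJ R hR σ = τ),
            Wsq q twoJ R (Phi twoJ R hR σ) := by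
          rw [Finset.sum_fiberwise_of_maps_to hmaps]
      _ ≤ q ^ (2 * R) * ∑ τ ∈ S, (twoJ : ℝ) ^ 2 * Wsq q twoJ R τ := by
          apply mul_le_mul_of_nonneg_left _ hq2R_pos.le
          apply Finset.sum_le_sum
          intro τ hτ
          have hconst : ∑ σ ∈ A.filter (fun σ => Phi twoJ R hR σ = τ),
              Wsq q twoJ R (Phi twoJ R hR σ)
              = ((A.filter (fun σ => Phi twoJ R hR σ = τ)).card : ℝ) * Wsq q twoJ R τ := by
            rw [Finset.sum_congr rfl
              (fun σ hσ => by rw [(Finset.mem_filter.mp hσ).2]),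
              Finset.sum_const, nsmul_eq_mul]
          rw [hconst]
          apply mul_le_mul_of_nonneg_right _ (hWpos τ).le
          calc ((A.filter (fun σ => Phi twoJ R hR σ = τ)).card : ℝ)
              ≤ ((twoJ ^ 2 : ℕ) : ℝ) := by exact_mod_cast hfiber τ
            _ = (twoJ : ℝ) ^ 2 := by push_cast; ring
      _ = ((twoJ : ℝ) ^ 2 * q ^ (2 * R)) * ∑ τ ∈ S, Wsq q twoJ R τ := by
          rw [← Finset.mul_sum]; ring
      _ ≤ ε * ∑ τ ∈ S, Wsq q twoJ R τ := by
          apply mul_le_mul_of_nonneg_right _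
            (Finset.sum_nonneg fun τ _ => (hWpos τ).le)
          rw [hεdef]
          nlinarith [mul_nonneg (mul_nonneg (sub_nonneg.mpr hR1)
            (sq_nonneg ((twoJ : ℝ)))) hq2R_pos.le]
  have hN0 : 0 ≤ ∑ σ ∈ A, Wsq q twoJ R σ :=
    Finset.sum_nonneg fun σ _ => (hWpos σ).le
  have hD0 : 0 ≤ ∑ τ ∈ S, Wsq q twoJ R τ :=
    Finset.sum_nonneg fun τ _ => (hWpos τ).le
  rcases hD0.eq_or_lt with hD | hD
  · have hNz : ∑ σ ∈ A, Wsq q twoJ R σ = 0 := by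
      refine le_antisymm ?_ hN0
      calc ∑ σ ∈ A, Wsq q twoJ R σ ≤ ε * ∑ τ ∈ S, Wsq q twoJ R τ := hchain
        _ = 0 := by rw [← hD, mul_zero]
    rw [hNz, zero_div]
    exact div_nonneg hε0 h1ε.le
  · rw [div_le_div_iff₀ hD h1ε]
    nlinarith [hchain, mul_nonneg hN0 hε0]


end XXZ
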